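/- arXiv:1903.07924 — 4 statements merged into one kernel-verified Lean document; each statement's English description precedes it below -/
import Mathlib

section
/- Let R be an n×m matrix and let K = K_R(R) = {Rp : p ≥ 0} be a proper cone. Suppose A is an n×n matrix such that for some α ∈ ℝ and some entrywise strictly positive m×m matrix P one has (αI + A)R = RP. Then for every nonzero δx ∈ K and every nonzero h in the dual cone K* with ⟨h, δx⟩ = 0, one has ⟨h, A δx⟩ > 0. -/
open Matrix

/-- A (convex) cone: closed under addition and nonnegative scaling. -/
def IsConvexCone {n : ℕ} (K : Set (Fin n → ℝ)) : Prop :=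
  (∀ x ∈ K, ∀ y ∈ K, x + y ∈ K) ∧ (∀ x ∈ K, ∀ c : ℝ, 0 ≤ c → c • x ∈ K)

/-- A proper cone: closed convex cone with nonempty interior, pointed. -/
def IsProperCone {n : ℕ} (K : Set (Fin n → ℝ)) : Prop :=
  IsConvexCone K ∧ IsClosed K ∧ (interior K).Nonempty ∧ ∀ x ∈ K, -x ∈ K → x = 0

/-- The dual cone. -/
def dualCone {n : ℕ} (K : Set (Fin n → ℝ)) : Set (Fin n → ℝ) :=
  {h | ∀ r ∈ K, 0 ≤ h ⬝ᵥ r}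

/-- The conical hull of the columns of a matrix (R-representation). -/
def coneOf {n m : ℕ} (R : Matrix (Fin n) (Fin m) ℝ) : Set (Fin n → ℝ) :=
  {x | ∃ p : Fin m → ℝ, (∀ j, 0 ≤ p j) ∧ x = R *ᵥ p}

/-!
Write `δx = R p` with `p ≥ 0`, `p ≠ 0`, and set `q = hᵀ R`. Pairing `h` with the columns of `R`
gives `q ≥ 0`, and `q ≠ 0` because a nonzero linear functional cannot vanish on a cone with nonempty
interior. Applying `(αI + A) R = R P` to `p` and pairing with `h`, the `α`-term drops out since
`⟨h, δx⟩ = 0`, leaving `⟨h, A δx⟩ = ⟨q, P p⟩`; this is positive because `P p` is entrywise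
positive.
-/

variable {ι : Type*} [Fintype ι]

theorem eq_zero_of_dotProduct_eq_zero_of_nonempty_interior {K : Set (ι → ℝ)}
    (hK : (interior K).Nonempty) {h : ι → ℝ} (hvan : ∀ x ∈ K, h ⬝ᵥ x = 0) : h = 0 := by
  let H := LinearMap.ker (dotProductBilin ℝ ℝ h)
  have hH : H = ⊤ :=
    H.eq_top_of_nonempty_interior' (hK.mono (interior_mono fun x hx => hvan x hx))
  have hH' : h ∈ H := hH ▸ Submodule.mem_top
  exact dotProduct_self_eq_zero.mp (LinearMap.mem_ker.mp hH')

theorem dotProduct_pos_of_nonneg_of_pos {q v : ι → ℝ} (hq : 0 ≤ q) (hq0 : q ≠ 0)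
    (hv : ∀ i, 0 < v i) : 0 < q ⬝ᵥ v := by
  obtain ⟨i, hi⟩ : ∃ i, 0 < q i := by
    by_contra! hle
    exact hq0 (le_antisymm hle hq)
  exact Finset.sum_pos' (fun j _ => mul_nonneg (hq j) (hv j).le)
    ⟨i, Finset.mem_univ i, mul_pos hi (hv i)⟩

theorem mulVec_pos_of_pos {κ : Type*} {P : Matrix κ ι ℝ} (hP : ∀ i j, 0 < P i j) {p : ι → ℝ}
    (hp : 0 ≤ p) (hp0 : p ≠ 0) (i : κ) : 0 < (P *ᵥ p) i := by
  rw [mulVec, dotProduct_comm]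
  exact dotProduct_pos_of_nonneg_of_pos hp hp0 (hP i)

section coneOf

variable {n m : ℕ} {R : Matrix (Fin n) (Fin m) ℝ}

theorem nonneg_vecMul_of_mem_dualCone {h : Fin n → ℝ} (hh : h ∈ dualCone (coneOf R)) :
    0 ≤ h ᵥ* R := fun j => by
  have hcol : R *ᵥ Pi.single j 1 ∈ coneOf R :=
    ⟨Pi.single j 1, fun _ => by simp only [Pi.single_apply]; positivity, rfl⟩
  simpa only [dotProduct_mulVec, dotProduct_single_one, Pi.zero_apply] using hh _ hcol

theorem vecMul_ne_zero_of_mem_dualCone (hK : (interior (coneOf R)).Nonempty) {h : Fin n → ℝ}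
    (hh0 : h ≠ 0) : h ᵥ* R ≠ 0 := by
  intro hq
  refine hh0 (eq_zero_of_dotProduct_eq_zero_of_nonempty_interior hK ?_)
  rintro _ ⟨p, -, rfl⟩
  rw [dotProduct_mulVec, hq, zero_dotProduct]

end coneOf

theorem mul_dotProduct_add_dotProduct_mulVec_of_mul_eq {n m : Type*} [Fintype n] [Fintype m]
    [DecidableEq n] {R : Matrix n m ℝ} {A : Matrix n n ℝ} {α : ℝ} {P : Matrix m m ℝ}
    (heq : (α • (1 : Matrix n n ℝ) + A) * R = R * P) (h : n → ℝ) (p : m → ℝ) :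
    α * (h ⬝ᵥ (R *ᵥ p)) + h ⬝ᵥ (A *ᵥ (R *ᵥ p)) = (h ᵥ* R) ⬝ᵥ (P *ᵥ p) := by
  have := congrArg (fun M => h ⬝ᵥ (M *ᵥ p)) heq
  simpa only [← mulVec_mulVec, add_mulVec, smul_mulVec, one_mulVec, dotProduct_add,
    dotProduct_smul, smul_eq_mul, dotProduct_mulVec] using this

/-- If K = K_R(R) is a proper cone and (αI + A)R = RP with P entrywise positive,
then A satisfies the strict sub-tangentiality condition with respect to K. -/
theorem stmt3 {n m : ℕ} (R : Matrix (Fin n) (Fin m) ℝ) (A : Matrix (Fin n) (Fin n) ℝ)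
    (hproper : IsProperCone (coneOf R))
    (α : ℝ) (P : Matrix (Fin m) (Fin m) ℝ) (hP : ∀ i j, 0 < P i j)
    (heq : (α • (1 : Matrix (Fin n) (Fin n) ℝ) + A) * R = R * P) :
    ∀ δx ∈ coneOf R, δx ≠ 0 → ∀ h ∈ dualCone (coneOf R), h ≠ 0 →
      h ⬝ᵥ δx = 0 → 0 < h ⬝ᵥ (A *ᵥ δx) := by
  rintro _ ⟨p, hp, rfl⟩ hδx h hh hh0 horth
  have hp0 : p ≠ 0 := by
    rintro rfl
    exact hδx (mulVec_zero R)
  have hpair := mul_dotProduct_add_dotProduct_mulVec_of_mul_eq heq h p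
  rw [horth, mul_zero, zero_add] at hpair
  rw [hpair]
  exact dotProduct_pos_of_nonneg_of_pos (nonneg_vecMul_of_mem_dualCone hh)
    (vecMul_ne_zero_of_mem_dualCone hproper.2.2.1 hh0) (mulVec_pos_of_pos hP hp hp0)
end

section
/- Let K be a proper cone in ℝⁿ and A an n×n matrix such that for all nonzero δx ∈ K and nonzero h ∈ K* with ⟨h, δx⟩ = 0 one has ⟨h, A δx⟩ > 0 (strict sub-tangentiality). Then the flow e^{At} maps K into itself for all t ≥ 0, i.e., x ∈ K implies e^{At} x ∈ K. -/
/-!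
Sub-tangentiality is an open condition on the pair `(x, h)`: where `⟨h, x⟩ > 0` this is clear,
and where `⟨h, x⟩ = 0` the hypothesis gives `⟨h, A x⟩ > 0`. Compactness of the unit sections of
`K` and `K*` makes it uniform, so `⟨h, (1 + s M) x⟩ ≥ 0` on `K × K*` for all `(s, M)` near `(0, A)`
with `s ≥ 0`, i.e. `1 + s M` maps `K` into `K` (the bipolar theorem). As
`exp (s A) = 1 + s M(s)` with `M(s) = s⁻¹ (exp (s A) - 1) → A`, the matrix `exp (s A)` maps `K`
into `K` for small `s > 0`, and `exp (t A) = exp ((t / m) A) ^ m`.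
-/

open Matrix

open Filter Topology NormedSpace Metric

lemma tendsto_slope_exp_smul {m : Type*} [Fintype m] [DecidableEq m] (A : Matrix m m ℝ) :
    Tendsto (fun s : ℝ => s⁻¹ • (exp (s • A) - 1)) (𝓝[>] 0) (𝓝 A) := by
  -- `exp` only depends on the topology, so any algebra norm yields its derivative.
  let := Matrix.linftyOpNormedRing (n := m) (α := ℝ)
  let := Matrix.linftyOpNormedAlgebra (n := m) (R := ℝ) (α := ℝ)
  have h := (hasDerivAt_exp_smul_const A (0 : ℝ)).tendsto_slope_zero_right
  simp only [zero_add, zero_smul, exp_zero, one_mul] at h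
  exact h

lemma Set.MapsTo.mulVec_pow {m R : Type*} [Fintype m] [DecidableEq m] [Semiring R]
    {N : Matrix m m R} {K : Set (m → R)} (hN : Set.MapsTo (N *ᵥ ·) K K) (k : ℕ) :
    Set.MapsTo ((N ^ k) *ᵥ ·) K K := by
  induction k with
  | zero => intro x hx; simpa using hx
  | succ k ih =>
    intro x hx
    simpa only [pow_succ, ← mulVec_mulVec] using ih (hN hx)

section Cone

variable {n : ℕ} {K : Set (Fin n → ℝ)}

lemma IsConvexCone.mem_of_dualCone_dotProduct_nonneg (hK : IsConvexCone K)
    (hcl : IsClosed K) (hne : K.Nonempty) {z : Fin n → ℝ}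
    (hz : ∀ h ∈ dualCone K, 0 ≤ h ⬝ᵥ z) : z ∈ K := by
  obtain ⟨w, hw⟩ := hne
  let C : ProperCone ℝ (Fin n → ℝ) :=
    { carrier := K
      add_mem' := fun hx hy => hK.1 _ hx _ hy
      zero_mem' := by simpa using hK.2 w hw 0 le_rfl
      smul_mem' := fun c x hx => hK.2 x hx c c.2
      isClosed' := hcl }
  by_contra hzK
  obtain ⟨f, hfK, hfz⟩ := C.hyperplane_separation_point (x₀ := z) hzK
  set h := (dotProductEquiv ℝ (Fin n)).symm f.toLinearMap
  have hf : ∀ y, h ⬝ᵥ y = f y := fun y =>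
    congrArg (· y) ((dotProductEquiv ℝ (Fin n)).apply_symm_apply f.toLinearMap)
  exact (hz h fun r hr => (hf r).symm ▸ hfK r hr).not_gt (hf z ▸ hfz)

variable (K) in
lemma isClosed_dualCone : IsClosed (dualCone K) := by
  simp only [dualCone, Set.ofPred_forall]
  exact isClosed_biInter fun r _ => isClosed_le continuous_const (by fun_prop)

lemma smul_mem_dualCone {h : Fin n → ℝ} (hh : h ∈ dualCone K) {c : ℝ} (hc : 0 ≤ c) :
    c • h ∈ dualCone K := fun r hr => by
  simpa only [smul_dotProduct, smul_eq_mul] using mul_nonneg hc (hh r hr)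

lemma IsConvexCone.dotProduct_mulVec_nonneg_of_sphere (hK : IsConvexCone K)
    {N : Matrix (Fin n) (Fin n) ℝ}
    (hN : ∀ x ∈ K ∩ sphere 0 1, ∀ h ∈ dualCone K ∩ sphere 0 1, 0 ≤ h ⬝ᵥ N *ᵥ x)
    {x : Fin n → ℝ} (hx : x ∈ K) {h : Fin n → ℝ} (hh : h ∈ dualCone K) : 0 ≤ h ⬝ᵥ N *ᵥ x := by
  rcases eq_or_ne x 0 with rfl | hx0
  · simp
  rcases eq_or_ne h 0 with rfl | hh0
  · simp
  have hx' : ‖x‖⁻¹ • x ∈ K ∩ sphere 0 1 :=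
    ⟨hK.2 x hx _ (inv_nonneg.2 (norm_nonneg x)), by simpa using norm_smul_inv_norm (𝕜 := ℝ) hx0⟩
  have hh' : ‖h‖⁻¹ • h ∈ dualCone K ∩ sphere 0 1 :=
    ⟨smul_mem_dualCone hh (inv_nonneg.2 (norm_nonneg h)),
      by simpa using norm_smul_inv_norm (𝕜 := ℝ) hh0⟩
  have key := hN _ hx' _ hh'
  rw [mulVec_smul, smul_dotProduct, dotProduct_smul, smul_eq_mul, smul_eq_mul] at key
  exact (mul_nonneg_iff_of_pos_left (inv_pos.2 (norm_pos_iff.2 hx0))).1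
    ((mul_nonneg_iff_of_pos_left (inv_pos.2 (norm_pos_iff.2 hh0))).1 key)

variable {A : Matrix (Fin n) (Fin n) ℝ}

lemma eventually_dotProduct_one_add_smul_mulVec_nonneg
    (hsub : ∀ δx ∈ K, δx ≠ 0 → ∀ h ∈ dualCone K, h ≠ 0 →
      h ⬝ᵥ δx = 0 → 0 < h ⬝ᵥ (A *ᵥ δx))
    {q : (Fin n → ℝ) × (Fin n → ℝ)}
    (hq : q ∈ (K ∩ sphere 0 1) ×ˢ (dualCone K ∩ sphere 0 1)) :
    ∀ᶠ z : (ℝ × Matrix (Fin n) (Fin n) ℝ) × (Fin n → ℝ) × (Fin n → ℝ) in 𝓝 ((0, A), q),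
      0 ≤ z.1.1 → 0 ≤ z.2.2 ⬝ᵥ z.2.1 → 0 ≤ z.2.2 ⬝ᵥ (1 + z.1.1 • z.1.2) *ᵥ z.2.1 := by
  obtain ⟨⟨hxK, hx1⟩, hhK, hh1⟩ := hq
  have hexpand : ∀ z : (ℝ × Matrix (Fin n) (Fin n) ℝ) × (Fin n → ℝ) × (Fin n → ℝ),
      z.2.2 ⬝ᵥ (1 + z.1.1 • z.1.2) *ᵥ z.2.1 =
        z.2.2 ⬝ᵥ z.2.1 + z.1.1 * (z.2.2 ⬝ᵥ z.1.2 *ᵥ z.2.1) := by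
    intro z
    rw [add_mulVec, one_mulVec, smul_mulVec, dotProduct_add, dotProduct_smul, smul_eq_mul]
  rcases (hhK q.1 hxK).eq_or_lt with h0 | hpos
  · have hA : 0 < q.2 ⬝ᵥ A *ᵥ q.1 :=
      hsub _ hxK (ne_zero_of_mem_unit_sphere ⟨_, hx1⟩) _ hhK
        (ne_zero_of_mem_unit_sphere ⟨_, hh1⟩) h0.symm
    have hcont : Continuous fun z : (ℝ × Matrix (Fin n) (Fin n) ℝ) × (Fin n → ℝ) × (Fin n → ℝ) =>
        z.2.2 ⬝ᵥ z.1.2 *ᵥ z.2.1 := by fun_prop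
    filter_upwards [hcont.continuousAt.eventually (lt_mem_nhds hA)] with z hz hs hzx
    rw [hexpand]
    exact add_nonneg hzx (mul_nonneg hs hz.le)
  · have hcont : Continuous fun z : (ℝ × Matrix (Fin n) (Fin n) ℝ) × (Fin n → ℝ) × (Fin n → ℝ) =>
        z.2.2 ⬝ᵥ (1 + z.1.1 • z.1.2) *ᵥ z.2.1 := by fun_prop
    have hval : 0 < q.2 ⬝ᵥ (1 + (0 : ℝ) • A) *ᵥ q.1 := by simpa using hpos
    filter_upwards [hcont.continuousAt.eventually (lt_mem_nhds hval)] with z hz _ _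
    exact hz.le

lemma eventually_mapsTo_one_add_smul_mulVec (hK : IsConvexCone K) (hcl : IsClosed K)
    (hne : K.Nonempty)
    (hsub : ∀ δx ∈ K, δx ≠ 0 → ∀ h ∈ dualCone K, h ≠ 0 →
      h ⬝ᵥ δx = 0 → 0 < h ⬝ᵥ (A *ᵥ δx)) :
    ∀ᶠ p : ℝ × Matrix (Fin n) (Fin n) ℝ in 𝓝 (0, A),
      0 ≤ p.1 → Set.MapsTo ((1 + p.1 • p.2) *ᵥ ·) K K := by
  have hS : IsCompact ((K ∩ sphere 0 1) ×ˢ (dualCone K ∩ sphere 0 1)) :=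
    ((isCompact_sphere 0 1).inter_left hcl).prod
      ((isCompact_sphere 0 1).inter_left (isClosed_dualCone K))
  filter_upwards [hS.eventually_forall_of_forall_eventually
    (P := fun p q => 0 ≤ p.1 → 0 ≤ q.2 ⬝ᵥ q.1 → 0 ≤ q.2 ⬝ᵥ (1 + p.1 • p.2) *ᵥ q.1)
    fun q hq => eventually_dotProduct_one_add_smul_mulVec_nonneg hsub hq] with p hp hs x hx
  refine hK.mem_of_dualCone_dotProduct_nonneg hcl hne fun h hh => ?_
  exact hK.dotProduct_mulVec_nonneg_of_sphere
    (fun y hy g hg => hp (y, g) ⟨hy, hg⟩ hs (hg.1 y hy.1)) hx hh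

lemma eventually_mapsTo_exp_smul_mulVec (hK : IsConvexCone K) (hcl : IsClosed K)
    (hne : K.Nonempty)
    (hsub : ∀ δx ∈ K, δx ≠ 0 → ∀ h ∈ dualCone K, h ≠ 0 →
      h ⬝ᵥ δx = 0 → 0 < h ⬝ᵥ (A *ᵥ δx)) :
    ∀ᶠ s in 𝓝[>] (0 : ℝ), Set.MapsTo (exp (s • A) *ᵥ ·) K K := by
  have hpair : Tendsto (fun s : ℝ => (s, s⁻¹ • (exp (s • A) - 1))) (𝓝[>] 0) (𝓝 (0, A)) :=
    (tendsto_nhdsWithin_of_tendsto_nhds tendsto_id).prodMk_nhds (tendsto_slope_exp_smul A)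
  filter_upwards [hpair.eventually (eventually_mapsTo_one_add_smul_mulVec hK hcl hne hsub),
    self_mem_nhdsWithin] with s hs hs0
  have hexp : 1 + s • s⁻¹ • (exp (s • A) - 1) = exp (s • A) := by
    rw [smul_smul, mul_inv_cancel₀ hs0.ne', one_smul, add_sub_cancel]
  simpa only [hexp] using hs (le_of_lt hs0)

end Cone

/-- Sub-tangentiality implies forward invariance: if K is a proper cone and A
satisfies strict sub-tangentiality with respect to K, then e^{At} maps K into
itself for all t ≥ 0. -/
theorem stmt14 {n : ℕ} (K : Set (Fin n → ℝ)) (hK : IsProperCone K)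
    (A : Matrix (Fin n) (Fin n) ℝ)
    (hsub : ∀ δx ∈ K, δx ≠ 0 → ∀ h ∈ dualCone K, h ≠ 0 →
      h ⬝ᵥ δx = 0 → 0 < h ⬝ᵥ (A *ᵥ δx)) :
    ∀ t : ℝ, 0 ≤ t → ∀ x ∈ K, (NormedSpace.exp (t • A)) *ᵥ x ∈ K := by
  obtain ⟨hKc, hcl, hint, -⟩ := hK
  intro t ht
  rcases ht.eq_or_lt with rfl | htpos
  · intro x hx
    simpa using hx
  have hlim : Tendsto (fun m : ℕ => t / m) atTop (𝓝[>] 0) :=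
    tendsto_nhdsWithin_iff.2 ⟨tendsto_const_div_atTop_nhds_zero_nat t,
      (eventually_gt_atTop 0).mono fun m hm => div_pos htpos (Nat.cast_pos.2 hm)⟩
  obtain ⟨m, hm, hmaps⟩ := ((eventually_gt_atTop 0).and (hlim.eventually
    (eventually_mapsTo_exp_smul_mulVec hKc hcl (hint.mono interior_subset) hsub))).exists
  have hsplit : exp (t • A) = exp ((t / m) • A) ^ m := by
    rw [← Matrix.exp_nsmul, ← Nat.cast_smul_eq_nsmul ℝ, smul_smul,
      mul_div_cancel₀ t (by positivity)]
  rw [hsplit]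
  exact hmaps.mulVec_pow m
end

section
/- Let A be an n×n matrix and K a proper cone such that the system ż = Az is strictly positive with respect to K (i.e., e^{At}(K \ {0}) ⊆ int(K) for t > 0). Then the dual system η̇ = Aᵀη is strictly positive with respect to the dual cone K*: e^{Aᵀt}(K* \ {0}) ⊆ int(K*) for t > 0. -/
open Matrix

/-- Pushing an interior point `y` slightly in the direction `-h` keeps it in `K`, so
`0 ≤ h ⬝ᵥ (y - δ • h) = h ⬝ᵥ y - δ (h ⬝ᵥ h)`. -/
lemma dotProduct_pos_of_mem_dualCone_of_mem_interior {n : ℕ} {K : Set (Fin n → ℝ)}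
    {h y : Fin n → ℝ} (hh : h ∈ dualCone K) (hne : h ≠ 0) (hy : y ∈ interior K) :
    0 < h ⬝ᵥ y := by
  have hcont : Continuous fun δ : ℝ => y - δ • h := by fun_prop
  have hnhds : ∀ᶠ δ in nhds (0 : ℝ), y - δ • h ∈ interior K :=
    hcont.continuousAt.preimage_mem_nhds (by simpa using isOpen_interior.mem_nhds hy)
  obtain ⟨δ, hδ, hδK⟩ := hnhds.exists_gt
  have hhh : 0 < h ⬝ᵥ h := by simpa using dotProduct_star_self_pos_iff.mpr hne
  have hpair : 0 ≤ h ⬝ᵥ y - δ * (h ⬝ᵥ h) := by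
    simpa [dotProduct_sub, dotProduct_smul] using hh _ (interior_subset hδK)
  linarith [mul_pos hδ hhh]

/-- By compactness of the unit sphere of `K`, strict positivity of `g` there persists
on a neighbourhood of `g`, and every nonzero `r ∈ K` is a positive multiple of a point
of that sphere. -/
lemma mem_interior_dualCone_of_pos {n : ℕ} {K : Set (Fin n → ℝ)} (hKc : IsClosed K)
    (hsmul : ∀ x ∈ K, ∀ c : ℝ, 0 ≤ c → c • x ∈ K) {g : Fin n → ℝ}
    (hg : ∀ r ∈ K, r ≠ 0 → 0 < g ⬝ᵥ r) : g ∈ interior (dualCone K) := by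
  have hS : IsCompact (K ∩ Metric.sphere 0 1) := (isCompact_sphere 0 1).inter_left hKc
  have hnear : ∀ᶠ g' in nhds g, ∀ u ∈ K ∩ Metric.sphere 0 1, 0 < g' ⬝ᵥ u := by
    refine hS.eventually_forall_of_forall_eventually fun u hu => ?_
    have hu0 : u ≠ 0 := ne_zero_of_mem_unit_sphere ⟨u, hu.2⟩
    exact continuousAt_const.eventually_lt
      (continuous_fst.dotProduct continuous_snd).continuousAt (hg u hu.1 hu0)
  refine mem_interior_iff_mem_nhds.mpr (hnear.mono fun g' hg' r hr => ?_)
  rcases eq_or_ne r 0 with rfl | hr0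
  · simp
  have hnorm : ‖r‖ ≠ 0 := norm_ne_zero_iff.mpr hr0
  have hu : ‖r‖⁻¹ • r ∈ K ∩ Metric.sphere 0 1 :=
    ⟨hsmul r hr _ (by positivity), by simp [norm_smul, hnorm]⟩
  have hr_eq : g' ⬝ᵥ r = ‖r‖ * (g' ⬝ᵥ (‖r‖⁻¹ • r)) := by
    rw [dotProduct_smul, smul_eq_mul, mul_inv_cancel_left₀ hnorm]
  rw [hr_eq]
  exact (mul_pos (norm_pos_iff.mpr hr0) (hg' _ hu)).le

lemma transpose_mulVec_mem_interior_dualCone {n : ℕ} {K : Set (Fin n → ℝ)}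
    (hKc : IsClosed K) (hsmul : ∀ x ∈ K, ∀ c : ℝ, 0 ≤ c → c • x ∈ K)
    {M : Matrix (Fin n) (Fin n) ℝ} (hM : ∀ x ∈ K, x ≠ 0 → M *ᵥ x ∈ interior K)
    {h : Fin n → ℝ} (hh : h ∈ dualCone K) (hne : h ≠ 0) :
    Mᵀ *ᵥ h ∈ interior (dualCone K) := by
  refine mem_interior_dualCone_of_pos hKc hsmul fun r hr hr0 => ?_
  rw [mulVec_transpose, ← dotProduct_mulVec]
  exact dotProduct_pos_of_mem_dualCone_of_mem_interior hh hne (hM r hr hr0)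

/-- Duality of strict positivity: if ż = Az is strictly positive with respect
to the proper cone K, then η̇ = Aᵀη is strictly positive with respect to K*. -/
theorem stmt16 {n : ℕ} (A : Matrix (Fin n) (Fin n) ℝ) (K : Set (Fin n → ℝ))
    (hK : IsProperCone K)
    (hpos : ∀ t : ℝ, 0 < t → ∀ x ∈ K, x ≠ 0 →
      (NormedSpace.exp (t • A)) *ᵥ x ∈ interior K) :
    ∀ t : ℝ, 0 < t → ∀ h ∈ dualCone K, h ≠ 0 →
      (NormedSpace.exp (t • Aᵀ)) *ᵥ h ∈ interior (dualCone K) := by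
  obtain ⟨⟨-, hsmul⟩, hKc, -, -⟩ := hK
  intro t ht h hh hne
  rw [← transpose_smul, exp_transpose]
  exact transpose_mulVec_mem_interior_dualCone hKc hsmul (hpos t ht) hh hne
end

section
/- Let v₁,…,v_k and u₁,…,u_k be nonzero vectors in ℝⁿ such that for some choice of signs σ_i, ε_j ∈ {−1, +1} all inner products ⟨ε_j u_j, σ_i v_i⟩ are strictly positive. Fix the orientation scheme: set ũ₁ = u₁; choose σ_i so that ⟨ũ₁, σ_i v_i⟩ ≥ 0; choose ε_j (j > 1) so that ⟨ε_j u_j, σ_j v_j⟩ ≥ 0. Then with these choices, ⟨ε_j u_j, σ_i v_i⟩ > 0 for all i, j; i.e., the orientation trick recovers a globally compatible sign assignment whenever one exists. -/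
open Matrix

/-- Correctness of the orientation trick: if some choice of signs makes all
pairwise inner products ⟨εⱼuⱼ, σᵢvᵢ⟩ strictly positive, then the greedy
orientation anchored at u₁ (ε₁ = 1; σᵢ chosen so ⟨u₁, σᵢvᵢ⟩ ≥ 0; εⱼ chosen so
⟨εⱼuⱼ, σⱼvⱼ⟩ ≥ 0) makes all pairwise inner products strictly positive. -/
theorem stmt18 {n k : ℕ} (v u : Fin k → (Fin n → ℝ))
    (hv : ∀ i, v i ≠ 0) (hu : ∀ j, u j ≠ 0)
    (σ ε : Fin k → ℝ)
    (hσ : ∀ i, σ i = 1 ∨ σ i = -1) (hε : ∀ j, ε j = 1 ∨ ε j = -1)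
    (hpos : ∀ i j, 0 < (ε j • u j) ⬝ᵥ (σ i • v i))
    (σ' ε' : Fin k → ℝ)
    (hσ' : ∀ i, σ' i = 1 ∨ σ' i = -1) (hε' : ∀ j, ε' j = 1 ∨ ε' j = -1)
    (hk : 0 < k)
    (hanchor : ε' ⟨0, hk⟩ = 1)
    (hgreedyσ : ∀ i, 0 ≤ (u ⟨0, hk⟩) ⬝ᵥ (σ' i • v i))
    (hgreedyε : ∀ j, 0 ≤ (ε' j • u j) ⬝ᵥ (σ' j • v j)) :
    ∀ i j, 0 < (ε' j • u j) ⬝ᵥ (σ' i • v i) := by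
  set z : Fin k := ⟨0, hk⟩
  simp only [smul_dotProduct, dotProduct_smul, smul_eq_mul] at hpos hgreedyσ hgreedyε ⊢
  -- σ' i = ε z * σ i
  have hσeq : ∀ i, σ' i = ε z * σ i := by
    intro i
    rcases hσ' i with h1 | h1 <;> rcases hσ i with h2 | h2 <;>
      rcases hε z with h3 | h3 <;>
      (have hp := hpos i z; have hg := hgreedyσ i;
       rw [h1] at hg; rw [h2, h3] at hp; simp only [h1, h2, h3]) <;>
      norm_num <;> linarith
  have hεeq : ∀ j, ε' j = ε z * ε j := by
    intro j
    have hg := hgreedyε j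
    rw [hσeq j] at hg
    rcases hε' j with h1 | h1 <;> rcases hε j with h2 | h2 <;>
      rcases hε z with h3 | h3 <;>
      (have hp := hpos j j;
       rw [h1, h3] at hg; rw [h2] at hp; simp only [h1, h2, h3]) <;>
      norm_num <;> linarith
  intro i j
  rw [hσeq i, hεeq j]
  rcases hε z with h3 | h3 <;> simp [h3] <;> nlinarith [hpos i j]
end
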